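/- arXiv:2302.08033 — 7 statements merged into one kernel-verified Lean document; each statement's English description precedes it below -/
import Mathlib

section
/- For every integer N ≥ 2 and all v, w ∈ V_h^(1), the discrete Green's formula (−Δ_h v, w)_{V¹} = (δ⁻₁ v, δ⁻₁ w)_{M} + (δ⁻₂ v, δ⁻₂ w)_{W¹} holds, where Δ_h v is evaluated at the nodes (i, j−1/2), 1 ≤ i ≤ N−1, 1 ≤ j ≤ N, δ⁻₁ v at the nodes (i−1/2, j−1/2), 1 ≤ i,j ≤ N, and δ⁻₂ v at the nodes (i,j), 1 ≤ i ≤ N−1, 0 ≤ j ≤ N. -/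
open Finset

noncomputable section

/-- mesh size `h = 1/N` -/
def gh (N : ℕ) : ℝ := 1 / (N : ℝ)

/-- weights `ρ_0 = ρ_N = 1/2`, `ρ_k = 1` otherwise -/
def rho (N k : ℕ) : ℝ := if k = 0 ∨ k = N then 1/2 else 1

/-- membership in `V_h^(1)`: `v i j` denotes `v_{i, j-1/2}` for `0 ≤ i ≤ N`, `0 ≤ j ≤ N+1`
(index `j` corresponds to the half-integer ordinate `j - 1/2`). -/
def inV1 (N : ℕ) (v : ℕ → ℕ → ℝ) : Prop :=
  (∀ j, v 0 j = 0) ∧ (∀ j, v N j = 0) ∧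
  (∀ i, v i 0 = - v i 1) ∧ (∀ i, v i (N+1) = - v i N)

/-- membership in `V_h^(2)`: `v i j` denotes `v_{i-1/2, j}` for `0 ≤ i ≤ N+1`, `0 ≤ j ≤ N`. -/
def inV2 (N : ℕ) (v : ℕ → ℕ → ℝ) : Prop :=
  (∀ i, v i 0 = 0) ∧ (∀ i, v i N = 0) ∧
  (∀ j, v 0 j = - v 1 j) ∧ (∀ j, v (N+1) j = - v N j)

/-- membership in `M_h`: `q i j` denotes `q_{i-1/2, j-1/2}` for `1 ≤ i, j ≤ N`, discrete mean zero. -/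
def inM (N : ℕ) (q : ℕ → ℕ → ℝ) : Prop :=
  ∑ i ∈ Icc 1 N, ∑ j ∈ Icc 1 N, q i j = 0

/-- `(·,·)_{M_h}` inner product (cell centers `1 ≤ i, j ≤ N`). -/
def innerM (N : ℕ) (q r : ℕ → ℕ → ℝ) : ℝ :=
  gh N ^ 2 * ∑ i ∈ Icc 1 N, ∑ j ∈ Icc 1 N, q i j * r i j

/-- `(·,·)_{V_h^(1)}` inner product (nodes `(i, j-1/2)`, `1 ≤ i ≤ N-1`, `1 ≤ j ≤ N`). -/
def innerV1 (N : ℕ) (v w : ℕ → ℕ → ℝ) : ℝ :=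
  gh N ^ 2 * ∑ i ∈ Icc 1 (N-1), ∑ j ∈ Icc 1 N, v i j * w i j

/-- `(·,·)_{V_h^(2)}` inner product (nodes `(i-1/2, j)`, `1 ≤ i ≤ N`, `1 ≤ j ≤ N-1`). -/
def innerV2 (N : ℕ) (v w : ℕ → ℕ → ℝ) : ℝ :=
  gh N ^ 2 * ∑ i ∈ Icc 1 N, ∑ j ∈ Icc 1 (N-1), v i j * w i j

/-- `(·,·)_{W_h^(1)}` inner product (vertices `1 ≤ i ≤ N-1`, `0 ≤ j ≤ N`, weights `ρ_j`). -/
def innerW1 (N : ℕ) (v w : ℕ → ℕ → ℝ) : ℝ :=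
  gh N ^ 2 * ∑ i ∈ Icc 1 (N-1), ∑ j ∈ Icc 0 N, rho N j * (v i j * w i j)

/-- `(·,·)_{W_h^(2)}` inner product (vertices `0 ≤ i ≤ N`, `1 ≤ j ≤ N-1`, weights `ρ_i`). -/
def innerW2 (N : ℕ) (v w : ℕ → ℕ → ℝ) : ℝ :=
  gh N ^ 2 * ∑ i ∈ Icc 0 N, ∑ j ∈ Icc 1 (N-1), rho N i * (v i j * w i j)

/-- `δ⁻₁` of a `V_h^(1)` function, evaluated at the cell center `(i-1/2, j-1/2)`. -/
def d1V1 (N : ℕ) (v : ℕ → ℕ → ℝ) : ℕ → ℕ → ℝ := fun i j => (v i j - v (i-1) j) / gh N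

/-- `δ⁻₂` of a `V_h^(1)` function, evaluated at the vertex `(i, j)`. -/
def d2V1 (N : ℕ) (v : ℕ → ℕ → ℝ) : ℕ → ℕ → ℝ := fun i j => (v i (j+1) - v i j) / gh N

/-- `δ⁻₁` of a `V_h^(2)` function, evaluated at the vertex `(i, j)`. -/
def d1V2 (N : ℕ) (v : ℕ → ℕ → ℝ) : ℕ → ℕ → ℝ := fun i j => (v (i+1) j - v i j) / gh N

/-- `δ⁻₂` of a `V_h^(2)` function, evaluated at the cell center `(i-1/2, j-1/2)`. -/
def d2V2 (N : ℕ) (v : ℕ → ℕ → ℝ) : ℕ → ℕ → ℝ := fun i j => (v i j - v i (j-1)) / gh N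

/-- `δ⁺₁` of a cell-centered function, evaluated at the node `(i, j-1/2)`. -/
def d1pM (N : ℕ) (q : ℕ → ℕ → ℝ) : ℕ → ℕ → ℝ := fun i j => (q (i+1) j - q i j) / gh N

/-- `δ⁺₂` of a cell-centered function, evaluated at the node `(i-1/2, j)`. -/
def d2pM (N : ℕ) (q : ℕ → ℕ → ℝ) : ℕ → ℕ → ℝ := fun i j => (q i (j+1) - q i j) / gh N

/-- the five-point discrete Laplacian `Δ_h = δ⁺₁δ⁻₁ + δ⁺₂δ⁻₂`. -/
def lap (N : ℕ) (v : ℕ → ℕ → ℝ) : ℕ → ℕ → ℝ := fun i j =>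
  (v (i+1) j - 2 * v i j + v (i-1) j) / gh N ^ 2
    + (v i (j+1) - 2 * v i j + v i (j-1)) / gh N ^ 2

/-- squared discrete `H¹` seminorm
`|v|₁² = ‖δ⁻₁v¹‖²_M + ‖δ⁻₂v¹‖²_{W¹} + ‖δ⁻₁v²‖²_{W²} + ‖δ⁻₂v²‖²_M`. -/
def H1semisq (N : ℕ) (v1 v2 : ℕ → ℕ → ℝ) : ℝ :=
  innerM N (d1V1 N v1) (d1V1 N v1) + innerW1 N (d2V1 N v1) (d2V1 N v1)
    + innerW2 N (d1V2 N v2) (d1V2 N v2) + innerM N (d2V2 N v2) (d2V2 N v2)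

/-- discrete `H¹` seminorm `|v|₁`. -/
def H1semi (N : ℕ) (v1 v2 : ℕ → ℕ → ℝ) : ℝ := Real.sqrt (H1semisq N v1 v2)

/-- `(e¹, e², e_p)` satisfies the discrete MAC Stokes system with residuals `(R¹, R², R)`. -/
def StokesSys (N : ℕ) (e1 e2 ep R1 R2 R : ℕ → ℕ → ℝ) : Prop :=
  (∀ i ∈ Icc 1 (N-1), ∀ j ∈ Icc 1 N, -lap N e1 i j + d1pM N ep i j = R1 i j) ∧
  (∀ i ∈ Icc 1 N, ∀ j ∈ Icc 1 (N-1), -lap N e2 i j + d2pM N ep i j = R2 i j) ∧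
  (∀ i ∈ Icc 1 N, ∀ j ∈ Icc 1 N, d1V1 N e1 i j + d2V2 N e2 i j = R i j)

/-!
Both sides split into a sum over columns and a sum over rows. Along a column `w` vanishes at
`i = 0` and `i = N`, so one-dimensional summation by parts leaves no boundary terms. Along a row
the ghost values `w_{i,-1/2} = -w_{i,1/2}`, `w_{i,N+1/2} = -w_{i,N-1/2}` turn the boundary terms
into exactly the half-weighted end terms of the trapezoidal weights `ρ`. The powers of `h` are
kept in the form `h² * (S / h²)` on both sides, so nothing divides by `h = 1/N` (junk at `N = 0`).
-/

theorem sum_Icc_one_eq_sum_range {M : Type*} [AddCommMonoid M] (n : ℕ) (F : ℕ → M) :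
    ∑ i ∈ Icc 1 n, F i = ∑ i ∈ range n, F (i + 1) := by
  rw [range_eq_Ico, sum_Ico_add', ← Ico_add_one_right_eq_Icc]

section SecondDifference

variable {R : Type*} [CommRing R]

def secondDiff (f : ℕ → R) (i : ℕ) : R := f (i + 1) - 2 * f i + f (i - 1)

theorem sum_range_diff_mul_diff (f g : ℕ → R) (M : ℕ) :
    ∑ i ∈ range (M + 1), (f (i + 1) - f i) * (g (i + 1) - g i)
      = ∑ i ∈ range M, -secondDiff f (i + 1) * g (i + 1)
        + (f (M + 1) - f M) * g (M + 1) - (f 1 - f 0) * g 0 := by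
  induction M with
  | zero => simp only [zero_add, sum_range_one, range_zero, sum_empty]; ring
  | succ M ih =>
    rw [sum_range_succ, ih, sum_range_succ, secondDiff, Nat.add_sub_cancel]
    ring

theorem sum_Icc_neg_secondDiff_mul_of_dirichlet (N : ℕ) (f g : ℕ → R) (hg0 : g 0 = 0)
    (hgN : g N = 0) :
    ∑ i ∈ Icc 1 (N - 1), -secondDiff f i * g i
      = ∑ i ∈ Icc 1 N, (f i - f (i - 1)) * (g i - g (i - 1)) := by
  rcases N with _ | M
  · simp
  · simp only [sum_Icc_one_eq_sum_range, Nat.add_sub_cancel, sum_range_diff_mul_diff, hg0, hgN]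
    ring

end SecondDifference

theorem sum_Icc_rho_mul (N : ℕ) (hN : N ≠ 0) (F : ℕ → ℝ) :
    ∑ j ∈ Icc 0 N, rho N j * F j = ∑ j ∈ range (N + 1), F j - (F 0 + F N) / 2 := by
  have hrho : ∀ j, rho N j = 1 - (if j = 0 then 1 / 2 else 0) - (if j = N then 1 / 2 else 0) := by
    intro j
    unfold rho
    split_ifs <;> first | omega | norm_num
  simp only [← Nat.range_succ_eq_Icc_zero, hrho, sub_mul, one_mul, ite_mul, zero_mul,
    sum_sub_distrib, sum_ite_eq', mem_range, N.succ_pos, N.lt_succ_self, if_true]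
  ring

theorem sum_Icc_neg_secondDiff_mul_of_neumann (N : ℕ) (hN : N ≠ 0) (a b : ℕ → ℝ)
    (hb0 : b 0 = -b 1) (hbN : b (N + 1) = -b N) :
    ∑ j ∈ Icc 1 N, -secondDiff a j * b j
      = ∑ j ∈ Icc 0 N, rho N j * ((a (j + 1) - a j) * (b (j + 1) - b j)) := by
  rw [sum_Icc_rho_mul N hN, sum_range_diff_mul_diff, sum_Icc_one_eq_sum_range, hb0, hbN]
  ring

theorem innerV1_neg_lap (N : ℕ) (v w : ℕ → ℕ → ℝ) :
    innerV1 N (fun i j => -lap N v i j) w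
      = gh N ^ 2 * ((∑ i ∈ Icc 1 (N - 1), ∑ j ∈ Icc 1 N, -secondDiff (v · j) i * w i j
          + ∑ i ∈ Icc 1 (N - 1), ∑ j ∈ Icc 1 N, -secondDiff (v i) j * w i j) / gh N ^ 2) := by
  simp only [innerV1, lap, secondDiff, ← sum_add_distrib, sum_div]
  congr! 3
  ring

theorem innerM_d1V1 (N : ℕ) (v w : ℕ → ℕ → ℝ) :
    innerM N (d1V1 N v) (d1V1 N w)
      = gh N ^ 2 * ((∑ i ∈ Icc 1 N, ∑ j ∈ Icc 1 N,
          (v i j - v (i - 1) j) * (w i j - w (i - 1) j)) / gh N ^ 2) := by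
  simp only [innerM, d1V1, sum_div, div_mul_div_comm, sq]

theorem innerW1_d2V1 (N : ℕ) (v w : ℕ → ℕ → ℝ) :
    innerW1 N (d2V1 N v) (d2V1 N w)
      = gh N ^ 2 * ((∑ i ∈ Icc 1 (N - 1), ∑ j ∈ Icc 0 N,
          rho N j * ((v i (j + 1) - v i j) * (w i (j + 1) - w i j))) / gh N ^ 2) := by
  simp only [innerW1, d2V1, sum_div, div_mul_div_comm, mul_div_assoc, sq]

theorem discrete_green_formula_3_general (N : ℕ)
    (v w : ℕ → ℕ → ℝ) (hw : inV1 N w) :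
    innerV1 N (fun i j => -lap N v i j) w
      = innerM N (d1V1 N v) (d1V1 N w) + innerW1 N (d2V1 N v) (d2V1 N w) := by
  obtain ⟨hw0, hwN, hwb, hwt⟩ := hw
  rw [innerV1_neg_lap, innerM_d1V1, innerW1_d2V1, ← mul_add, ← add_div]
  congr 3
  · rw [sum_comm]
    conv_rhs => rw [sum_comm]
    exact sum_congr rfl fun j _ =>
      sum_Icc_neg_secondDiff_mul_of_dirichlet N (v · j) (w · j) (hw0 j) (hwN j)
  · refine sum_congr rfl fun i hi => ?_
    have hN : N ≠ 0 := by rw [mem_Icc] at hi; omega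
    exact sum_Icc_neg_secondDiff_mul_of_neumann N hN (v i) (w i) (hwb i) (hwt i)

/-- discrete Green's formula
`(−Δ_h v, w)_{V¹} = (δ⁻₁ v, δ⁻₁ w)_{M} + (δ⁻₂ v, δ⁻₂ w)_{W¹}`. -/
theorem discrete_green_formula_3 (N : ℕ) (hN : 2 ≤ N)
    (v w : ℕ → ℕ → ℝ) (hv : inV1 N v) (hw : inV1 N w) :
    innerV1 N (fun i j => -lap N v i j) w
      = innerM N (d1V1 N v) (d1V1 N w) + innerW1 N (d2V1 N v) (d2V1 N w) :=
  discrete_green_formula_3_general N v w hw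
end
end

section
/- There exists a constant C₁ > 0, independent of N, such that for every integer N ≥ 2 and every v ∈ V_h^(1), the discrete Poincaré inequality ‖v‖²_{V¹} ≤ C₁ ( ‖δ⁻₁ v‖²_{M} + ‖δ⁻₂ v‖²_{W¹} ) holds. -/
open Finset

noncomputable section

/-!
A function in `V_h^(1)` vanishes on the left wall `i = 0`, so along each horizontal line
`v_{i,j-1/2}` telescopes into the increments `v_{k,j-1/2} - v_{k-1,j-1/2}`, `k ≤ i`.
Cauchy–Schwarz bounds its square by `N` times the sum of the squared increments; summing over
the `N - 1 ≤ N` interior values of `i` and multiplying by `h² = 1/N²` gives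
`‖v‖²_{V¹} ≤ ‖δ⁻₁ v‖²_M`, so `C₁ = 1` works.
-/

theorem eq_sum_Icc_sub_of_eq_zero {v : ℕ → ℝ} (h0 : v 0 = 0) (i : ℕ) :
    v i = ∑ k ∈ Icc 1 i, (v k - v (k - 1)) := by
  induction i with
  | zero => simp [h0]
  | succ n ih => rw [sum_Icc_succ_top (by omega), ← ih]; simp

theorem sq_le_mul_sum_sq_sub {v : ℕ → ℝ} (h0 : v 0 = 0) {i n : ℕ} (hi : i ≤ n) :
    v i ^ 2 ≤ n * ∑ k ∈ Icc 1 n, (v k - v (k - 1)) ^ 2 := by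
  have hsub : ∑ k ∈ Icc 1 i, (v k - v (k - 1)) ^ 2 ≤ ∑ k ∈ Icc 1 n, (v k - v (k - 1)) ^ 2 :=
    sum_le_sum_of_subset_of_nonneg (Icc_subset_Icc_right hi) fun _ _ _ => sq_nonneg _
  calc v i ^ 2 = (∑ k ∈ Icc 1 i, (v k - v (k - 1))) ^ 2 := by
        rw [← eq_sum_Icc_sub_of_eq_zero h0]
    _ ≤ i * ∑ k ∈ Icc 1 i, (v k - v (k - 1)) ^ 2 := by
        simpa using sq_sum_le_card_mul_sum_sq (s := Icc 1 i) (f := fun k => v k - v (k - 1))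
    _ ≤ n * ∑ k ∈ Icc 1 n, (v k - v (k - 1)) ^ 2 := by
        gcongr

theorem sum_sq_le_sq_mul_sum_sq_sub {v : ℕ → ℝ} (h0 : v 0 = 0) {m n : ℕ} (hm : m ≤ n) :
    ∑ i ∈ Icc 1 m, v i ^ 2 ≤ (n : ℝ) ^ 2 * ∑ k ∈ Icc 1 n, (v k - v (k - 1)) ^ 2 := by
  calc ∑ i ∈ Icc 1 m, v i ^ 2 ≤ ∑ _i ∈ Icc 1 m, n * ∑ k ∈ Icc 1 n, (v k - v (k - 1)) ^ 2 :=
        sum_le_sum fun i hi => sq_le_mul_sum_sq_sub h0 (by simp at hi; omega)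
    _ ≤ (n : ℝ) ^ 2 * ∑ k ∈ Icc 1 n, (v k - v (k - 1)) ^ 2 := by
        rw [sum_const, nsmul_eq_mul, Nat.card_Icc, Nat.add_sub_cancel, ← mul_assoc, sq]
        gcongr

theorem rho_nonneg (N k : ℕ) : 0 ≤ rho N k := by
  unfold rho; split <;> norm_num

theorem innerW1_self_nonneg (N : ℕ) (w : ℕ → ℕ → ℝ) : 0 ≤ innerW1 N w w :=
  mul_nonneg (sq_nonneg _) <| sum_nonneg fun _ _ => sum_nonneg fun j _ =>
    mul_nonneg (rho_nonneg N j) (mul_self_nonneg _)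

theorem innerM_d1V1_self {N : ℕ} (hN : N ≠ 0) (v : ℕ → ℕ → ℝ) :
    innerM N (d1V1 N v) (d1V1 N v) = ∑ j ∈ Icc 1 N, ∑ i ∈ Icc 1 N, (v i j - v (i - 1) j) ^ 2 := by
  have hh : gh N ≠ 0 := by simp [gh, hN]
  rw [innerM, sum_comm, mul_sum]
  refine sum_congr rfl fun j _ => ?_
  rw [mul_sum]
  refine sum_congr rfl fun i _ => ?_
  simp only [d1V1]
  field_simp

theorem innerV1_self_le_innerM_d1V1 {N : ℕ} (hN : N ≠ 0) {v : ℕ → ℕ → ℝ} (h0 : ∀ j, v 0 j = 0) :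
    innerV1 N v v ≤ innerM N (d1V1 N v) (d1V1 N v) := by
  have hNh : gh N ^ 2 * (N : ℝ) ^ 2 = 1 := by simp [gh, hN]
  calc innerV1 N v v = gh N ^ 2 * ∑ j ∈ Icc 1 N, ∑ i ∈ Icc 1 (N - 1), v i j ^ 2 := by
        simp only [innerV1, sq, sum_comm (s := Icc 1 (N - 1))]
    _ ≤ gh N ^ 2 * ∑ j ∈ Icc 1 N, (N : ℝ) ^ 2 * ∑ i ∈ Icc 1 N, (v i j - v (i - 1) j) ^ 2 := by
        gcongr with j
        exact sum_sq_le_sq_mul_sum_sq_sub (v := fun i => v i j) (h0 j) (Nat.sub_le N 1)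
    _ = innerM N (d1V1 N v) (d1V1 N v) := by
        rw [← mul_sum, ← mul_assoc, hNh, one_mul, innerM_d1V1_self hN]

/-- discrete Poincaré inequality on `V_h^(1)`:
`‖v‖²_{V¹} ≤ C₁ (‖δ⁻₁ v‖²_{M} + ‖δ⁻₂ v‖²_{W¹})` with `C₁` independent of `N`. -/
theorem discrete_poincare_1 :
    ∃ C₁ : ℝ, 0 < C₁ ∧ ∀ N : ℕ, 2 ≤ N → ∀ v : ℕ → ℕ → ℝ, inV1 N v →
      innerV1 N v v
        ≤ C₁ * (innerM N (d1V1 N v) (d1V1 N v) + innerW1 N (d2V1 N v) (d2V1 N v)) := by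
  refine ⟨1, one_pos, fun N hN v hv => ?_⟩
  rw [one_mul]
  exact (innerV1_self_le_innerM_d1V1 (by omega) hv.1).trans
    (le_add_of_nonneg_right (innerW1_self_nonneg N _))
end
end

section
/- There exists a constant C₂ > 0, independent of N, such that for every integer N ≥ 2 and every v ∈ V_h^(2), the discrete Poincaré inequality ‖v‖²_{V²} ≤ C₂ ( ‖δ⁻₁ v‖²_{W²} + ‖δ⁻₂ v‖²_{M} ) holds. -/
open Finset

noncomputable section

/- Along each vertical line the grid function vanishes at `j = 0`, so `v_{i-1/2,j}` telescopes
into at most `N` vertical differences, and Cauchy–Schwarz gives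
`v_{i-1/2,j}² ≤ N Σ_k (v_{i-1/2,k} - v_{i-1/2,k-1})²`. Summing over the fewer than `N` values of `j`
and over `i`, the factor `N²` is exactly cancelled by `h² = 1/N²`, so `‖v‖²_{V²} ≤ ‖δ⁻₂ v‖²_M`
and `C₂ = 1` works. -/

theorem sum_Icc_one_sub_pred (f : ℕ → ℝ) (n : ℕ) :
    ∑ k ∈ Icc 1 n, (f k - f (k - 1)) = f n - f 0 := by
  induction n with
  | zero => simp
  | succ n ih => rw [sum_Icc_succ_top (by omega), ih, Nat.add_sub_cancel]; ring

theorem sq_le_mul_sum_sq_sub_pred {f : ℕ → ℝ} (hf : f 0 = 0) {j N : ℕ} (hj : j ≤ N) :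
    f j ^ 2 ≤ N * ∑ k ∈ Icc 1 N, (f k - f (k - 1)) ^ 2 := by
  have hsum : f j = ∑ k ∈ Icc 1 j, (f k - f (k - 1)) := by
    rw [sum_Icc_one_sub_pred, hf, sub_zero]
  calc f j ^ 2 ≤ (#(Icc 1 j) : ℝ) * ∑ k ∈ Icc 1 j, (f k - f (k - 1)) ^ 2 := by
        rw [hsum]; exact sq_sum_le_card_mul_sum_sq
    _ ≤ N * ∑ k ∈ Icc 1 N, (f k - f (k - 1)) ^ 2 := by
        gcongr ?_ * ?_
        · simpa using hj
        · exact sum_le_sum_of_subset_of_nonneg (Icc_subset_Icc_right hj)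
            fun _ _ _ ↦ sq_nonneg _

theorem sum_sq_le_sq_mul_sum_sq_sub_pred {f : ℕ → ℝ} (hf : f 0 = 0) (N : ℕ) :
    ∑ j ∈ Icc 1 (N - 1), f j ^ 2 ≤ (N : ℝ) ^ 2 * ∑ k ∈ Icc 1 N, (f k - f (k - 1)) ^ 2 := by
  calc ∑ j ∈ Icc 1 (N - 1), f j ^ 2
      ≤ ∑ _j ∈ Icc 1 (N - 1), N * ∑ k ∈ Icc 1 N, (f k - f (k - 1)) ^ 2 :=
        sum_le_sum fun j hj ↦ sq_le_mul_sum_sq_sub_pred hf (by simp at hj; omega)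
    _ ≤ N * (N * ∑ k ∈ Icc 1 N, (f k - f (k - 1)) ^ 2) := by
        rw [sum_const, nsmul_eq_mul]
        gcongr
        simp
    _ = (N : ℝ) ^ 2 * ∑ k ∈ Icc 1 N, (f k - f (k - 1)) ^ 2 := by ring

theorem innerM_d2V2_self (N : ℕ) (v : ℕ → ℕ → ℝ) :
    innerM N (d2V2 N v) (d2V2 N v) = ∑ i ∈ Icc 1 N, ∑ j ∈ Icc 1 N, (v i j - v i (j - 1)) ^ 2 := by
  rcases Nat.eq_zero_or_pos N with rfl | hN
  · simp [innerM]
  have hh : gh N ≠ 0 := by simp [gh]; omega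
  simp only [innerM, d2V2, mul_sum]
  refine sum_congr rfl fun i _ ↦ sum_congr rfl fun j _ ↦ ?_
  field_simp

theorem innerV2_self_le_innerM_d2V2_self (N : ℕ) {v : ℕ → ℕ → ℝ} (hv : ∀ i, v i 0 = 0) :
    innerV2 N v v ≤ innerM N (d2V2 N v) (d2V2 N v) := by
  rw [innerM_d2V2_self, innerV2, mul_sum]
  refine sum_le_sum fun i _ ↦ ?_
  have hhN : gh N ^ 2 * (N : ℝ) ^ 2 ≤ 1 := by
    rcases Nat.eq_zero_or_pos N with rfl | hN
    · simp
    · simp [gh, hN.ne']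
  calc gh N ^ 2 * ∑ j ∈ Icc 1 (N - 1), v i j * v i j
      ≤ gh N ^ 2 * ((N : ℝ) ^ 2 * ∑ k ∈ Icc 1 N, (v i k - v i (k - 1)) ^ 2) := by
        simp only [← sq]
        gcongr
        exact sum_sq_le_sq_mul_sum_sq_sub_pred (hv i) N
    _ ≤ ∑ k ∈ Icc 1 N, (v i k - v i (k - 1)) ^ 2 := by
        rw [← mul_assoc]
        exact mul_le_of_le_one_left (by positivity) hhN

theorem innerW2_self_nonneg (N : ℕ) (w : ℕ → ℕ → ℝ) : 0 ≤ innerW2 N w w := by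
  have hrho : ∀ k, 0 ≤ rho N k := fun k ↦ by unfold rho; split_ifs <;> norm_num
  unfold innerW2
  exact mul_nonneg (sq_nonneg _) <| sum_nonneg fun i _ ↦ sum_nonneg fun j _ ↦
    mul_nonneg (hrho i) (mul_self_nonneg _)

/-- discrete Poincaré inequality on `V_h^(2)`:
`‖v‖²_{V²} ≤ C₂ (‖δ⁻₁ v‖²_{W²} + ‖δ⁻₂ v‖²_{M})` with `C₂` independent of `N`. -/
theorem discrete_poincare_2 :
    ∃ C₂ : ℝ, 0 < C₂ ∧ ∀ N : ℕ, 2 ≤ N → ∀ v : ℕ → ℕ → ℝ, inV2 N v →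
      innerV2 N v v
        ≤ C₂ * (innerW2 N (d1V2 N v) (d1V2 N v) + innerM N (d2V2 N v) (d2V2 N v)) := by
  refine ⟨1, one_pos, fun N _ v hv ↦ ?_⟩
  have hV := innerV2_self_le_innerM_d2V2_self N hv.1
  have hW := innerW2_self_nonneg N (d1V2 N v)
  linarith
end
end

section
/- Discrete energy identity: for every integer N ≥ 2, if (e¹, e², e_p) ∈ V_h^(1) × V_h^(2) × M_h satisfies the discrete Stokes system with residuals (R¹, R², R), then |e|₁² = (e_p, R)_{M} + (R¹, e¹)_{V¹} + (R², e²)_{V²}, where e = (e¹, e²). -/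
open Finset

noncomputable section

/-! Testing the momentum equations with `e¹`, `e²` and the continuity equation with `e_p`, the
pressure terms cancel by summation by parts, since the normal velocity vanishes on the walls.
Each `-Δ_h` term becomes a sum of squared differences: for differences normal to the wall by the
same summation by parts, for tangential ones because the antisymmetric ghost values make the
boundary terms cancel, which leaves the trapezoidal weights `ρ_0 = ρ_N = 1/2`. -/

variable {K : Type*}

theorem sum_Icc_by_parts [CommRing K] (a c : ℕ → K) (M : ℕ) :
    ∑ i ∈ Icc 1 M, (a (i + 1) - a i) * c i + ∑ i ∈ Icc 1 (M + 1), a i * (c i - c (i - 1)) =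
      a (M + 1) * c (M + 1) - a 1 * c 0 := by
  have hsplit (i : ℕ) : (a (i + 1) - a i) * c i + a i * (c i - c (i - 1)) =
      a (i + 1) * c (i + 1 - 1) - a i * c (i - 1) := by
    rw [Nat.add_sub_cancel]; ring
  rw [sum_Icc_succ_top (by omega), ← add_assoc, ← sum_add_distrib,
    sum_congr rfl fun i _ => hsplit i, ← Ico_add_one_right_eq_Icc,
    sum_Ico_sub (f := fun i => a i * c (i - 1)) (by omega)]
  simp only [Nat.add_sub_cancel, Nat.sub_self]
  ring

theorem sum_Icc_by_parts_of_boundary_eq_zero [Field K] {N : ℕ} (a b : ℕ → K) (h : K)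
    (hb0 : b 0 = 0) (hbN : b N = 0) :
    ∑ i ∈ Icc 1 (N - 1), (a (i + 1) - a i) / h * b i
      + ∑ i ∈ Icc 1 N, a i * ((b i - b (i - 1)) / h) = 0 := by
  rcases N with _ | M
  · simp
  · have := sum_Icc_by_parts (fun i => a i / h) b M
    rw [hbN, hb0, mul_zero, mul_zero, sub_zero] at this
    rw [Nat.add_sub_cancel, ← this]
    congr 1 <;> exact sum_congr rfl fun i _ => by ring

theorem sum_neg_second_diff_mul_of_boundary_eq_zero [Field K] {N : ℕ} (b : ℕ → K) (h : K)
    (hb0 : b 0 = 0) (hbN : b N = 0) :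
    ∑ i ∈ Icc 1 (N - 1), -((b (i + 1) - 2 * b i + b (i - 1)) / h ^ 2) * b i
      = ∑ i ∈ Icc 1 N, (b i - b (i - 1)) / h * ((b i - b (i - 1)) / h) := by
  have := sum_Icc_by_parts_of_boundary_eq_zero (fun i => (b i - b (i - 1)) / h) b h hb0 hbN
  simp only [Nat.add_sub_cancel] at this
  rw [← neg_eq_of_add_eq_zero_right this, ← sum_neg_distrib]
  exact sum_congr rfl fun i _ => by ring

theorem sum_Icc_rho_mul_eq_sum_range_avg {N : ℕ} (hN : 0 < N) (x : ℕ → ℝ) :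
    ∑ j ∈ Icc 0 N, rho N j * x j = ∑ j ∈ range N, (x j + x (j + 1)) / 2 := by
  obtain ⟨M, rfl⟩ : ∃ M, N = M + 1 := ⟨N - 1, by omega⟩
  have hrho_end : rho (M + 1) 0 = 1 / 2 ∧ rho (M + 1) (M + 1) = 1 / 2 := by simp [rho]
  have hrho_mid : ∀ k ∈ range M, rho (M + 1) (k + 1) * x (k + 1) = x (k + 1) := fun k hk => by
    rw [rho, if_neg (by simp at hk; omega), one_mul]
  rw [← Nat.range_succ_eq_Icc_zero, sum_range_succ, sum_range_succ', sum_congr rfl hrho_mid,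
    ← sum_div, sum_add_distrib, sum_range_succ' x, sum_range_succ (fun k => x (k + 1)),
    hrho_end.1, hrho_end.2]
  ring

theorem sum_neg_second_diff_mul_of_antisymm_ghost {N : ℕ} (b : ℕ → ℝ) (h : ℝ) (hN : 0 < N)
    (hb0 : b 0 = -b 1) (hbN : b (N + 1) = -b N) :
    ∑ j ∈ Icc 1 N, -((b (j + 1) - 2 * b j + b (j - 1)) / h ^ 2) * b j
      = ∑ j ∈ Icc 0 N, rho N j * ((b (j + 1) - b j) / h * ((b (j + 1) - b j) / h)) := by
  set x : ℕ → ℝ := fun j => (b (j + 1) - b j) / h * ((b (j + 1) - b j) / h)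
  -- the half squares `b_{j+1}^2 / 2 - b_j^2 / 2` telescope, and the ghost values kill both ends
  set s : ℕ → ℝ := fun j => (b (j + 1) ^ 2 - b j ^ 2) / (2 * h ^ 2)
  have hterm (k : ℕ) : -((b (k + 1 + 1) - 2 * b (k + 1) + b k) / h ^ 2) * b (k + 1)
      = (x k + x (k + 1)) / 2 + (s k - s (k + 1)) := by
    simp only [x, s]; ring
  have hs : s 0 = 0 ∧ s N = 0 := by simp [s, hb0, hbN]
  rw [sum_Icc_rho_mul_eq_sum_range_avg hN, ← Ico_add_one_right_eq_Icc, sum_Ico_eq_sum_range,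
    Nat.add_sub_cancel]
  simp only [add_comm 1, Nat.add_sub_cancel]
  rw [sum_congr rfl fun k _ => hterm k, sum_add_distrib, sum_range_sub', hs.1, hs.2, sub_zero,
    add_zero]

section

variable {N : ℕ} {q r v f g : ℕ → ℕ → ℝ}

theorem innerM_eq_add_of_forall
    (hfg : ∀ i ∈ Icc 1 N, ∀ j ∈ Icc 1 N, f i j + g i j = r i j) :
    innerM N q r = innerM N q f + innerM N q g := by
  simp only [innerM, ← mul_add, ← sum_add_distrib]
  exact congrArg _ <| sum_congr rfl fun i hi => sum_congr rfl fun j hj => by rw [hfg i hi j hj]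

theorem innerV1_eq_add_of_forall
    (hfg : ∀ i ∈ Icc 1 (N - 1), ∀ j ∈ Icc 1 N, f i j + g i j = r i j) :
    innerV1 N r v = innerV1 N f v + innerV1 N g v := by
  simp only [innerV1, ← mul_add, ← add_mul, ← sum_add_distrib]
  exact congrArg _ <| sum_congr rfl fun i hi => sum_congr rfl fun j hj => by rw [hfg i hi j hj]

theorem innerV2_eq_add_of_forall
    (hfg : ∀ i ∈ Icc 1 N, ∀ j ∈ Icc 1 (N - 1), f i j + g i j = r i j) :
    innerV2 N r v = innerV2 N f v + innerV2 N g v := by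
  simp only [innerV2, ← mul_add, ← add_mul, ← sum_add_distrib]
  exact congrArg _ <| sum_congr rfl fun i hi => sum_congr rfl fun j hj => by rw [hfg i hi j hj]

theorem innerV1_d1pM_add_innerM_d1V1 (h0 : ∀ j, v 0 j = 0) (hN : ∀ j, v N j = 0) :
    innerV1 N (d1pM N q) v + innerM N q (d1V1 N v) = 0 := by
  rw [innerV1, innerM, ← mul_add, sum_comm (s := Icc 1 (N - 1)),
    sum_comm (s := Icc 1 N) (t := Icc 1 N), ← sum_add_distrib]
  exact mul_eq_zero_of_right _ <| sum_eq_zero fun j _ =>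
    sum_Icc_by_parts_of_boundary_eq_zero (q · j) (v · j) (gh N) (h0 j) (hN j)

theorem innerV2_d2pM_add_innerM_d2V2 (h0 : ∀ i, v i 0 = 0) (hN : ∀ i, v i N = 0) :
    innerV2 N (d2pM N q) v + innerM N q (d2V2 N v) = 0 := by
  rw [innerV2, innerM, ← mul_add, ← sum_add_distrib]
  exact mul_eq_zero_of_right _ <| sum_eq_zero fun i _ =>
    sum_Icc_by_parts_of_boundary_eq_zero (q i) (v i) (gh N) (h0 i) (hN i)

theorem innerV1_neg_lap_s8 (hv : inV1 N v) :
    innerV1 N (-lap N v) v = innerM N (d1V1 N v) (d1V1 N v) + innerW1 N (d2V1 N v) (d2V1 N v) := by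
  obtain ⟨h0, hN, hlo, hhi⟩ := hv
  rw [innerV1_eq_add_of_forall
    (f := fun i j => -((v (i + 1) j - 2 * v i j + v (i - 1) j) / gh N ^ 2))
    (g := fun i j => -((v i (j + 1) - 2 * v i j + v i (j - 1)) / gh N ^ 2))
    fun i _ j _ => by simp only [Pi.neg_apply, lap]; ring]
  unfold innerV1 innerM innerW1
  congr 2
  · exact sum_comm.trans <| (sum_congr rfl fun j _ =>
      sum_neg_second_diff_mul_of_boundary_eq_zero (v · j) (gh N) (h0 j) (hN j)).trans sum_comm
  · exact sum_congr rfl fun i hi =>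
      sum_neg_second_diff_mul_of_antisymm_ghost (v i) (gh N) (by simp at hi; omega) (hlo i) (hhi i)

theorem innerV2_neg_lap (hv : inV2 N v) :
    innerV2 N (-lap N v) v = innerW2 N (d1V2 N v) (d1V2 N v) + innerM N (d2V2 N v) (d2V2 N v) := by
  obtain ⟨h0, hN, hlo, hhi⟩ := hv
  rw [innerV2_eq_add_of_forall
    (f := fun i j => -((v (i + 1) j - 2 * v i j + v (i - 1) j) / gh N ^ 2))
    (g := fun i j => -((v i (j + 1) - 2 * v i j + v i (j - 1)) / gh N ^ 2))
    fun i _ j _ => by simp only [Pi.neg_apply, lap]; ring]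
  unfold innerV2 innerM innerW2
  congr 2
  · exact sum_comm.trans <| (sum_congr rfl fun j hj =>
      sum_neg_second_diff_mul_of_antisymm_ghost (v · j) (gh N) (by simp at hj; omega) (hlo j)
        (hhi j)).trans sum_comm
  · exact sum_congr rfl fun i _ =>
      sum_neg_second_diff_mul_of_boundary_eq_zero (v i) (gh N) (h0 i) (hN i)

end

theorem discrete_energy_identity_general (N : ℕ)
    (e1 e2 ep R1 R2 R : ℕ → ℕ → ℝ)
    (he1 : inV1 N e1) (he2 : inV2 N e2)
    (hsys : StokesSys N e1 e2 ep R1 R2 R) :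
    H1semisq N e1 e2 = innerM N ep R + innerV1 N R1 e1 + innerV2 N R2 e2 := by
  obtain ⟨hmom1, hmom2, hdiv⟩ := hsys
  rw [innerM_eq_add_of_forall hdiv, innerV1_eq_add_of_forall (f := -lap N e1) hmom1,
    innerV2_eq_add_of_forall (f := -lap N e2) hmom2, innerV1_neg_lap_s8 he1, innerV2_neg_lap he2]
  have hp1 := innerV1_d1pM_add_innerM_d1V1 (q := ep) he1.1 he1.2.1
  have hp2 := innerV2_d2pM_add_innerM_d2V2 (q := ep) he2.1 he2.2.1
  rw [H1semisq]
  linarith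

/-- discrete energy identity:
`|e|₁² = (e_p, R)_M + (R¹, e¹)_{V¹} + (R², e²)_{V²}`. -/
theorem discrete_energy_identity (N : ℕ) (hN : 2 ≤ N)
    (e1 e2 ep R1 R2 R : ℕ → ℕ → ℝ)
    (he1 : inV1 N e1) (he2 : inV2 N e2) (hep : inM N ep)
    (hsys : StokesSys N e1 e2 ep R1 R2 R) :
    H1semisq N e1 e2 = innerM N ep R + innerV1 N R1 e1 + innerV2 N R2 e2 :=
  discrete_energy_identity_general N e1 e2 ep R1 R2 R he1 he2 hsys
end
end

section
/- Unique solvability of the first-order jump system: let t = (t₁, t₂) ∈ ℝ² with t₁² + t₂² = 1 and let n = (n₁, n₂) be a unit vector orthogonal to t (so n = (t₂, −t₁) or n = (−t₂, t₁)). Then the 5×5 real matrix with rows (t₁, t₂, 0, 0, 0), (0, 0, t₁, t₂, 0), (1, 0, 0, 1, 0), (2n₁, n₂, n₂, 0, −n₁), (0, n₁, n₁, 2n₂, −n₂) has nonzero determinant; equivalently, it is invertible. -/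
/-! The determinant is the Lorentzian form `(t ⬝ n)² - (t × n)²` of the dot and cross products
of `t` and `n`. For a unit normal orthogonal to `t` the dot product vanishes and the cross product
is `±1`, so the determinant is `-1`. -/

theorem det_jump_system_matrix {R : Type*} [CommRing R] (t₁ t₂ n₁ n₂ : R) :
    (!![t₁, t₂, 0, 0, 0;
        0, 0, t₁, t₂, 0;
        1, 0, 0, 1, 0;
        2 * n₁, n₂, n₂, 0, -n₁;
        0, n₁, n₁, 2 * n₂, -n₂] : Matrix (Fin 5) (Fin 5) R).det =
      (t₁ * n₁ + t₂ * n₂) ^ 2 - (t₁ * n₂ - t₂ * n₁) ^ 2 := by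
  simp [Matrix.det_succ_row_zero, Fin.sum_univ_succ, Fin.succAbove]
  ring

/-- unique solvability of the first-order jump system: for a unit tangent
`t = (t₁, t₂)` and a unit normal `n = (n₁, n₂)` orthogonal to `t`, the 5×5 coefficient
matrix of the linear system for `([[u¹_x]], [[u¹_y]], [[u²_x]], [[u²_y]], [[p]])` has
nonzero determinant, i.e. it is invertible. -/
theorem first_order_jump_system_invertible (t₁ t₂ n₁ n₂ : ℝ)
    (ht : t₁ ^ 2 + t₂ ^ 2 = 1)
    (hn : (n₁ = t₂ ∧ n₂ = -t₁) ∨ (n₁ = -t₂ ∧ n₂ = t₁)) :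
    (!![t₁, t₂, 0, 0, 0;
        0, 0, t₁, t₂, 0;
        1, 0, 0, 1, 0;
        2 * n₁, n₂, n₂, 0, -n₁;
        0, n₁, n₁, 2 * n₂, -n₂] : Matrix (Fin 5) (Fin 5) ℝ).det ≠ 0 := by
  obtain ⟨dot_eq_zero, cross_sq_eq_one⟩ :
      t₁ * n₁ + t₂ * n₂ = 0 ∧ (t₁ * n₂ - t₂ * n₁) ^ 2 = 1 := by
    rcases hn with ⟨h₁, h₂⟩ | ⟨h₁, h₂⟩ <;> rw [h₁, h₂] <;>
      exact ⟨by ring, by linear_combination (t₁ ^ 2 + t₂ ^ 2 + 1) * ht⟩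
  rw [det_jump_system_matrix, dot_eq_zero, cross_sq_eq_one]
  norm_num
end

section
/- First-order accuracy of the corrected second difference at an irregular node: let h > 0, x₀ ∈ ℝ, and s ∈ (x₀, x₀ + h). Let u⁺, u⁻ : ℝ → ℝ be three times continuously differentiable on [x₀ − h, x₀ + h], and define u(x) = u⁺(x) for x ≤ s and u(x) = u⁻(x) for x > s. Set ξ = x₀ + h − s, J = [[u]](s) + ξ [[u']](s) + (1/2) ξ² [[u'']](s), and let M₃ be the maximum over [x₀ − h, x₀ + h] of |(u⁺)'''| and |(u⁻)'''|. Then |(u(x₀ − h) − 2 u(x₀) + u(x₀ + h) + J)/h² − (u⁺)''(x₀)| ≤ M₃ h. -/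
/-!
Expand `u⁺` to second order about `x₀` at `x₀ ± h`, and both `u⁺` and `u⁻` to second order
about `s` at `x₀ + h`. In the second difference `u(x₀ - h) - 2u(x₀) + u(x₀ + h)` the value
`u(x₀ + h) = u⁻(x₀ + h)` comes from the wrong branch; the correction `J` is exactly the
difference of the two Taylor polynomials about `s`, so adding it replaces `u⁻(x₀ + h)` by
`u⁺(x₀ + h)` up to two Lagrange remainders of size `M₃ ξ³/6 ≤ M₃ h³/6`. What is left is the
usual second difference of the smooth `u⁺`, which equals `h² (u⁺)''(x₀)` up to `2 · M₃ h³/6`.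
-/

open Set Nat

section IteratedDerivWithin

variable {𝕜 F : Type*} [NontriviallyNormedField 𝕜] [NormedAddCommGroup F] [NormedSpace 𝕜 F]

theorem iteratedDerivWithin_eq_of_subset {f : 𝕜 → F} {s t : Set 𝕜} {n : WithTop ℕ∞} {m : ℕ}
    (hf : ContDiffOn 𝕜 n f t) (hst : s ⊆ t) (hs : UniqueDiffOn 𝕜 s) (ht : UniqueDiffOn 𝕜 t)
    (hm : (m : WithTop ℕ∞) ≤ n) {x : 𝕜} (hx : x ∈ s) :
    iteratedDerivWithin m f s x = iteratedDerivWithin m f t x := by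
  simp only [iteratedDerivWithin_eq_iteratedFDerivWithin,
    ← ((hf.ftaylorSeriesWithin ht).mono hst).eq_iteratedFDerivWithin_of_uniqueDiffOn hm hs hx]
  rfl

end IteratedDerivWithin

theorem taylorWithinEval_eq_of_subset {E : Type*} [NormedAddCommGroup E] [NormedSpace ℝ E]
    {f : ℝ → E} {s t : Set ℝ} {n : ℕ}
    (hf : ContDiffOn ℝ n f t) (hst : s ⊆ t) (hs : UniqueDiffOn ℝ s) (ht : UniqueDiffOn ℝ t)
    {c : ℝ} (hc : c ∈ s) (d : ℝ) :
    taylorWithinEval f n s c d = taylorWithinEval f n t c d := by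
  simp only [taylor_within_apply]
  refine Finset.sum_congr rfl fun k hk => ?_
  rw [iteratedDerivWithin_eq_of_subset hf hst hs ht
    (by exact_mod_cast Finset.mem_range_succ_iff.1 hk) hc]

theorem taylorWithinEval_two (f : ℝ → ℝ) (s : Set ℝ) (c d : ℝ) :
    taylorWithinEval f 2 s c d = f c + (d - c) * iteratedDerivWithin 1 f s c
      + (d - c) ^ 2 / 2 * iteratedDerivWithin 2 f s c := by
  simp only [taylor_within_apply, Finset.sum_range_succ, Finset.sum_range_zero, smul_eq_mul,
    iteratedDerivWithin_zero, factorial]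
  push_cast
  ring

theorem abs_sub_taylorWithinEval_le {f : ℝ → ℝ} {a b c d M : ℝ} {n : ℕ}
    (hf : ContDiffOn ℝ (n + 1) f (Icc a b)) (hc : c ∈ Icc a b) (hd : d ∈ Icc a b)
    (hM : ∀ y ∈ Icc a b, |iteratedDerivWithin (n + 1) f (Icc a b) y| ≤ M) :
    |f d - taylorWithinEval f n (Icc a b) c d| ≤ M * |d - c| ^ (n + 1) / (n + 1)! := by
  rcases eq_or_ne c d with rfl | hcd
  · simp [taylorWithinEval_self]
  have hsub : uIcc c d ⊆ Icc a b := uIcc_subset_Icc hc hd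
  have hu : UniqueDiffOn ℝ (uIcc c d) := uniqueDiffOn_uIcc hcd
  have hab : a < b := by rcases hcd.lt_or_gt with h | h <;> linarith [hc.1, hc.2, hd.1, hd.2]
  have hfu : ContDiffOn ℝ (n + 1) f (uIcc c d) := hf.mono hsub
  obtain ⟨y, hy, hrem⟩ := taylor_mean_remainder_lagrange hcd hfu.of_succ
    ((hfu.differentiableOn_iteratedDerivWithin (by norm_cast; omega) hu).mono
      uIoo_subset_uIcc_self)
  have hyu : y ∈ uIcc c d := uIoo_subset_uIcc_self hy
  rw [← taylorWithinEval_eq_of_subset hf.of_succ hsub hu (uniqueDiffOn_Icc hab) left_mem_uIcc,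
    hrem, iteratedDerivWithin_eq_of_subset hf hsub hu (uniqueDiffOn_Icc hab) le_rfl hyu,
    abs_div, abs_mul, abs_pow, abs_of_pos (by positivity : (0 : ℝ) < (n + 1)!)]
  gcongr
  exact hM y (hsub hyu)

theorem abs_sub_taylorWithinEval_two_le {f : ℝ → ℝ} {a b c d M : ℝ}
    (hf : ContDiffOn ℝ 3 f (Icc a b)) (hc : c ∈ Icc a b) (hd : d ∈ Icc a b)
    (hM : ∀ y ∈ Icc a b, |iteratedDerivWithin 3 f (Icc a b) y| ≤ M) :
    |f d - (f c + (d - c) * iteratedDerivWithin 1 f (Icc a b) c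
      + (d - c) ^ 2 / 2 * iteratedDerivWithin 2 f (Icc a b) c)| ≤ M * |d - c| ^ 3 / 6 := by
  have := abs_sub_taylorWithinEval_le (n := 2) hf hc hd hM
  rwa [taylorWithinEval_two, show ((2 + 1)! : ℝ) = 6 by norm_num [factorial]] at this

theorem abs_div_sq_sub_le_of_abs_sub_mul_sq_le {N q M h : ℝ} (hh : 0 < h)
    (hN : |N - h ^ 2 * q| ≤ M * h ^ 3) : |N / h ^ 2 - q| ≤ M * h := by
  have hh2 : 0 < h ^ 2 := by positivity
  rw [show N / h ^ 2 - q = (N - h ^ 2 * q) / h ^ 2 by field_simp, abs_div, abs_of_pos hh2,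
    div_le_iff₀ hh2]
  linarith

/-- first-order accuracy of the corrected second difference at an irregular
node: with `ξ = x₀ + h − s`, `J = [[u]](s) + ξ [[u']](s) + ξ²/2 [[u'']](s)` and `M₃` a
bound for the third derivatives of `u⁺`, `u⁻` on `[x₀ − h, x₀ + h]`, the corrected second
difference of the piecewise function `u` approximates `(u⁺)''(x₀)` with error `≤ M₃ h`. -/
theorem corrected_second_difference_first_order
    (h x₀ s : ℝ) (hh : 0 < h) (hs : s ∈ Set.Ioo x₀ (x₀ + h))
    (up um u : ℝ → ℝ)
    (hup : ContDiffOn ℝ 3 up (Set.Icc (x₀ - h) (x₀ + h)))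
    (hum : ContDiffOn ℝ 3 um (Set.Icc (x₀ - h) (x₀ + h)))
    (hu₁ : ∀ x, x ≤ s → u x = up x)
    (hu₂ : ∀ x, s < x → u x = um x)
    (M₃ : ℝ)
    (hM : ∀ x ∈ Set.Icc (x₀ - h) (x₀ + h),
      |iteratedDerivWithin 3 up (Set.Icc (x₀ - h) (x₀ + h)) x| ≤ M₃ ∧
      |iteratedDerivWithin 3 um (Set.Icc (x₀ - h) (x₀ + h)) x| ≤ M₃) :
    |(u (x₀ - h) - 2 * u x₀ + u (x₀ + h)
        + ((up s - um s)
          + (x₀ + h - s)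
            * (iteratedDerivWithin 1 up (Set.Icc (x₀ - h) (x₀ + h)) s
                - iteratedDerivWithin 1 um (Set.Icc (x₀ - h) (x₀ + h)) s)
          + (1 / 2) * (x₀ + h - s) ^ 2
            * (iteratedDerivWithin 2 up (Set.Icc (x₀ - h) (x₀ + h)) s
                - iteratedDerivWithin 2 um (Set.Icc (x₀ - h) (x₀ + h)) s))) / h ^ 2
      - iteratedDerivWithin 2 up (Set.Icc (x₀ - h) (x₀ + h)) x₀| ≤ M₃ * h := by
  obtain ⟨hx₀s, hsh⟩ := hs
  have hl : x₀ - h ∈ Icc (x₀ - h) (x₀ + h) := left_mem_Icc.2 (by linarith)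
  have hr : x₀ + h ∈ Icc (x₀ - h) (x₀ + h) := right_mem_Icc.2 (by linarith)
  have hx₀ : x₀ ∈ Icc (x₀ - h) (x₀ + h) := ⟨by linarith, by linarith⟩
  have hsI : s ∈ Icc (x₀ - h) (x₀ + h) := ⟨by linarith, hsh.le⟩
  have hMp := fun y hy => (hM y hy).1
  have hMm := fun y hy => (hM y hy).2
  have hM₃ : 0 ≤ M₃ := (abs_nonneg _).trans (hMp x₀ hx₀)
  have hξ : M₃ * |x₀ + h - s| ^ 3 ≤ M₃ * h ^ 3 := by
    gcongr
    rw [abs_of_pos (by linarith)]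
    linarith
  have e₁ := abs_sub_taylorWithinEval_two_le hup hx₀ hl hMp
  have e₂ := abs_sub_taylorWithinEval_two_le hup hx₀ hr hMp
  have e₃ := abs_sub_taylorWithinEval_two_le hup hsI hr hMp
  have e₄ := abs_sub_taylorWithinEval_two_le hum hsI hr hMm
  rw [show x₀ - h - x₀ = -h by ring, abs_neg, abs_of_pos hh] at e₁
  rw [show x₀ + h - x₀ = h by ring, abs_of_pos hh] at e₂
  rw [hu₁ _ (by linarith), hu₁ _ hx₀s.le, hu₂ _ hsh]
  refine abs_div_sq_sub_le_of_abs_sub_mul_sq_le hh ?_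
  -- the numerator minus `h² (u⁺)''(x₀)` is the remainder sum `e₁ + e₂ + e₄ - e₃`
  rw [abs_le] at e₁ e₂ e₃ e₄ ⊢
  constructor <;> linarith
end

section
/- First-order accuracy of the corrected pressure difference at an irregular node: let h > 0, a ∈ ℝ, b = a + h, and s ∈ (a, b). Let p⁺, p⁻ : ℝ → ℝ be twice continuously differentiable on [a, b], and define p(x) = p⁺(x) for x ≤ s and p(x) = p⁻(x) for x > s. Set ξ = b − s, J = [[p]](s) + ξ [[p']](s), and let M₂ be the maximum over [a, b] of |(p⁺)''| and |(p⁻)''|. Then |(p(b) − p(a) + J)/h − (p⁺)'((a + b)/2)| ≤ 2 M₂ h. -/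
/-!
Write `b = a + h` and `ξ = b - s`. Since `p b = p⁻ b` and `p a = p⁺ a`, the corrected difference
splits as `p b - p a + J = R⁻ - R⁺ + h (p⁺)'(s)`, with the first-order Taylor remainders
`R⁻ = p⁻ b - p⁻ s - ξ (p⁻)'(s)` and `R⁺ = p⁺ a - p⁺ s - (a - s) (p⁺)'(s)` about the interface.
As `(p±)'` are `M₂`-Lipschitz, `|R⁻| ≤ M₂ ξ²`, `|R⁺| ≤ M₂ (s - a)²` and
`|(p⁺)'(s) - (p⁺)'((a + b)/2)| ≤ M₂ h / 2`, so the error is at most `3 M₂ h / 2`.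
-/

open Set

theorem abs_sub_sub_mul_le_of_abs_deriv_sub_le {f f' : ℝ → ℝ} {D : Set ℝ} {M x y : ℝ}
    (hD : Convex ℝ D) (hf : ∀ z ∈ D, HasDerivWithinAt f (f' z) D z)
    (hf' : ∀ z ∈ D, |f' z - f' x| ≤ M * |z - x|) (hM : 0 ≤ M)
    (hx : x ∈ D) (hy : y ∈ D) :
    |f y - f x - (y - x) * f' x| ≤ M * (y - x) ^ 2 := by
  have hxy : uIcc x y ⊆ D := hD.ordConnected.uIcc_subset hx hy
  have hderiv : ∀ z ∈ uIcc x y,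
      HasDerivWithinAt (fun z => f z - z * f' x) (f' z - f' x) (uIcc x y) z := fun z hz =>
    (((hf z (hxy hz)).mono hxy).sub ((hasDerivWithinAt_id z _).mul_const (f' x))).congr_deriv
      (by simp)
  have hbound : ∀ z ∈ uIcc x y, ‖f' z - f' x‖ ≤ M * |y - x| := fun z hz =>
    (hf' z (hxy hz)).trans (mul_le_mul_of_nonneg_left (abs_sub_left_of_mem_uIcc hz) hM)
  have := (convex_uIcc x y).norm_image_sub_le_of_norm_hasDerivWithin_le hderiv hbound
    left_mem_uIcc right_mem_uIcc
  rw [Real.norm_eq_abs, Real.norm_eq_abs] at this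
  calc |f y - f x - (y - x) * f' x| = |f y - y * f' x - (f x - x * f' x)| := by ring_nf
    _ ≤ M * |y - x| * |y - x| := this
    _ = M * (y - x) ^ 2 := by rw [mul_assoc, ← sq, sq_abs]

section SecondDerivativeBound

variable {f : ℝ → ℝ} {D : Set ℝ} {M : ℝ}

theorem ContDiffOn.abs_derivWithin_sub_le (hf : ContDiffOn ℝ 2 f D) (hD : Convex ℝ D)
    (hu : UniqueDiffOn ℝ D) (hM : ∀ z ∈ D, |iteratedDerivWithin 2 f D z| ≤ M)
    {x y : ℝ} (hx : x ∈ D) (hy : y ∈ D) :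
    |derivWithin f D y - derivWithin f D x| ≤ M * |y - x| := by
  have hdiff : DifferentiableOn ℝ (derivWithin f D) D := by
    simpa only [iteratedDerivWithin_one] using
      hf.differentiableOn_iteratedDerivWithin (m := 1) (by norm_num) hu
  have := hD.norm_image_sub_le_of_norm_hasDerivWithin_le
    (fun z hz => (hdiff z hz).hasDerivWithinAt) (fun z hz => by
      simpa only [iteratedDerivWithin_succ (n := 1), iteratedDerivWithin_one, Real.norm_eq_abs]
        using hM z hz) hx hy
  simpa only [Real.norm_eq_abs] using this

theorem ContDiffOn.abs_sub_sub_mul_derivWithin_le (hf : ContDiffOn ℝ 2 f D) (hD : Convex ℝ D)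
    (hu : UniqueDiffOn ℝ D) (hM : ∀ z ∈ D, |iteratedDerivWithin 2 f D z| ≤ M)
    {x y : ℝ} (hx : x ∈ D) (hy : y ∈ D) :
    |f y - f x - (y - x) * derivWithin f D x| ≤ M * (y - x) ^ 2 :=
  abs_sub_sub_mul_le_of_abs_deriv_sub_le hD
    (fun z hz => ((hf.differentiableOn two_ne_zero) z hz).hasDerivWithinAt)
    (fun _ hz => hf.abs_derivWithin_sub_le hD hu hM hx hz) ((abs_nonneg _).trans (hM x hx)) hx hy

end SecondDerivativeBound

theorem abs_corrected_difference_sub_mul_derivWithin_le {f g : ℝ → ℝ} {a b s M : ℝ}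
    (hab : a < b) (has : a ≤ s) (hsb : s ≤ b)
    (hf : ContDiffOn ℝ 2 f (Icc a b)) (hg : ContDiffOn ℝ 2 g (Icc a b))
    (hMf : ∀ x ∈ Icc a b, |iteratedDerivWithin 2 f (Icc a b) x| ≤ M)
    (hMg : ∀ x ∈ Icc a b, |iteratedDerivWithin 2 g (Icc a b) x| ≤ M) :
    |g b - f a + ((f s - g s) + (b - s) * (derivWithin f (Icc a b) s - derivWithin g (Icc a b) s))
      - (b - a) * derivWithin f (Icc a b) ((a + b) / 2)| ≤ 3 / 2 * M * (b - a) ^ 2 := by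
  have hu : UniqueDiffOn ℝ (Icc a b) := uniqueDiffOn_Icc hab
  have hsI : s ∈ Icc a b := ⟨has, hsb⟩
  have hM : 0 ≤ M := (abs_nonneg _).trans (hMf s hsI)
  have hRg := hg.abs_sub_sub_mul_derivWithin_le (convex_Icc a b) hu hMg hsI (right_mem_Icc.2 hab.le)
  have hRf := hf.abs_sub_sub_mul_derivWithin_le (convex_Icc a b) hu hMf hsI (left_mem_Icc.2 hab.le)
  have hLip := hf.abs_derivWithin_sub_le (convex_Icc a b) hu hMf
    (x := (a + b) / 2) ⟨by linarith, by linarith⟩ hsI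
  have hsm : |s - (a + b) / 2| ≤ (b - a) / 2 := abs_le.2 ⟨by linarith, by linarith⟩
  set f' := derivWithin f (Icc a b)
  calc _ = |(g b - g s - (b - s) * derivWithin g (Icc a b) s) - (f a - f s - (a - s) * f' s)
          + (b - a) * (f' s - f' ((a + b) / 2))| := by
        congr 1; ring
    _ ≤ M * (b - s) ^ 2 + M * (a - s) ^ 2 + (b - a) * (M * ((b - a) / 2)) := by
        refine (abs_add_le _ _).trans (add_le_add ((abs_sub _ _).trans (add_le_add hRg hRf)) ?_)
        rw [abs_mul, abs_of_pos (sub_pos.2 hab)]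
        exact mul_le_mul_of_nonneg_left (hLip.trans (mul_le_mul_of_nonneg_left hsm hM))
          (sub_nonneg.2 hab.le)
    _ ≤ 3 / 2 * M * (b - a) ^ 2 := by
        nlinarith [mul_nonneg hM (mul_nonneg (sub_nonneg.2 has) (sub_nonneg.2 hsb))]

/-- first-order accuracy of the corrected pressure difference at an
irregular node: with `b = a + h`, `ξ = b − s`, `J = [[p]](s) + ξ [[p']](s)` and `M₂` a
bound for the second derivatives of `p⁺`, `p⁻` on `[a, b]`, the corrected difference of
the piecewise function `p` approximates `(p⁺)'((a+b)/2)` with error `≤ 2 M₂ h`. -/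
theorem corrected_pressure_difference_first_order
    (h a s : ℝ) (hh : 0 < h) (hs : s ∈ Set.Ioo a (a + h))
    (pp pm p : ℝ → ℝ)
    (hpp : ContDiffOn ℝ 2 pp (Set.Icc a (a + h)))
    (hpm : ContDiffOn ℝ 2 pm (Set.Icc a (a + h)))
    (hp₁ : ∀ x, x ≤ s → p x = pp x)
    (hp₂ : ∀ x, s < x → p x = pm x)
    (M₂ : ℝ)
    (hM : ∀ x ∈ Set.Icc a (a + h),
      |iteratedDerivWithin 2 pp (Set.Icc a (a + h)) x| ≤ M₂ ∧
      |iteratedDerivWithin 2 pm (Set.Icc a (a + h)) x| ≤ M₂) :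
    |(p (a + h) - p a
        + ((pp s - pm s)
          + (a + h - s)
            * (iteratedDerivWithin 1 pp (Set.Icc a (a + h)) s
                - iteratedDerivWithin 1 pm (Set.Icc a (a + h)) s))) / h
      - iteratedDerivWithin 1 pp (Set.Icc a (a + h)) ((a + (a + h)) / 2)| ≤ 2 * M₂ * h := by
  obtain ⟨has, hsb⟩ := hs
  have hM₂ : 0 ≤ M₂ := (abs_nonneg _).trans (hM a ⟨le_rfl, by linarith⟩).1
  have key := abs_corrected_difference_sub_mul_derivWithin_le (lt_add_of_pos_right a hh) has.le
    hsb.le hpp hpm (fun x hx => (hM x hx).1) (fun x hx => (hM x hx).2)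
  simp only [iteratedDerivWithin_one]
  rw [hp₂ _ hsb, hp₁ _ has.le, div_sub' hh.ne', abs_div, abs_of_pos hh, div_le_iff₀ hh]
  rw [add_sub_cancel_left] at key
  exact key.trans (by nlinarith [mul_nonneg hM₂ (sq_nonneg h)])
end
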